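/- arXiv:2503.10929 — 4 statements merged into one kernel-verified Lean document; each statement's English description precedes it below -/
import Mathlib

section
/- Suppose Y = α + θD + π₁X₁ + π₂X₂ + ρX₁X₂ + ε with ε independent of (D, X₁, X₂), and let f_⊥ denote the residual from projecting X₁X₂ onto X = (1, X₁, X₂)^T (in L^2). If Var(f_⊥) ≠ 0 and Cov(D, f_⊥) ≠ 0, then the IV estimand θ_IV = Cov(Y, f_⊥)/Cov(D, f_⊥) satisfies θ_IV = θ + ρ · Var(f_⊥)·(Cov(X₁X₂, f_⊥)/Var(f_⊥)) / Cov(D, f_⊥), which simplifies to θ_IV = θ + ρ · Var(f_⊥)/Cov(D, f_⊥). -/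
open MeasureTheory ProbabilityTheory

noncomputable section

/-- Covariance of two real random variables. -/
def cov {Ω : Type*} [MeasurableSpace Ω] (μ : Measure Ω) (U V : Ω → ℝ) : ℝ :=
  (∫ ω, U ω * V ω ∂μ) - (∫ ω, U ω ∂μ) * (∫ ω, V ω ∂μ)

/-- The second-moment (Gram) matrix `E[X Xᵀ]`. -/
def gram {Ω : Type*} [MeasurableSpace Ω] (μ : Measure Ω) {n : ℕ} (X : Ω → Fin n → ℝ) :
    Matrix (Fin n) (Fin n) ℝ :=
  Matrix.of fun i j => ∫ ω, X ω i * X ω j ∂μ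

/-- The coefficient vector `E[X Xᵀ]⁻¹ E[X W]` of the L² projection of `W` on `X`. -/
def projCoef {Ω : Type*} [MeasurableSpace Ω] (μ : Measure Ω) {n : ℕ}
    (X : Ω → Fin n → ℝ) (W : Ω → ℝ) : Fin n → ℝ :=
  (gram μ X)⁻¹.mulVec fun i => ∫ ω, X ω i * W ω ∂μ

/-- The projection residual `W_⊥ = W − Xᵀ E[X Xᵀ]⁻¹ E[X W]`. -/
def resid {Ω : Type*} [MeasurableSpace Ω] (μ : Measure Ω) {n : ℕ}
    (X : Ω → Fin n → ℝ) (W : Ω → ℝ) : Ω → ℝ :=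
  fun ω => W ω - ∑ j, X ω j * projCoef μ X W j

/-- Product of two L⁴ functions is L². -/
lemma aux_memLp_mul {Ω : Type*} [MeasurableSpace Ω] {μ : Measure Ω} {f g : Ω → ℝ}
    (hf : MemLp f 4 μ) (hg : MemLp g 4 μ) : MemLp (fun ω => f ω * g ω) 2 μ := by
  have h : MemLp (f • g) 2 μ := hg.smul hf (hpqr := ⟨by
    rw [← two_mul, show (4 : ENNReal) = 2 * 2 by norm_num, ENNReal.mul_inv (by simp) (by simp),
      ← mul_assoc, ENNReal.mul_inv_cancel (by simp) (by simp), one_mul]⟩)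
  exact h

/-- Product of two L² functions is integrable. -/
lemma aux_int_mul {Ω : Type*} [MeasurableSpace Ω] {μ : Measure Ω} {f g : Ω → ℝ}
    (hf : MemLp f 2 μ) (hg : MemLp g 2 μ) : Integrable (fun ω => f ω * g ω) μ := by
  have h : MemLp (f • g) 1 μ := hg.smul hf (hpqr := ⟨by
    rw [ENNReal.inv_two_add_inv_two, inv_one]⟩)
  rw [memLp_one_iff_integrable] at h
  exact h

/-- product-instrument bias:
`θ_IV = θ + ρ·Var(f_⊥)/Cov(D, f_⊥)` where `f_⊥` is the residual from
projecting `X₁X₂` onto `X = (1, X₁, X₂)ᵀ`. -/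
theorem stmt4 {Ω : Type*} [MeasurableSpace Ω] (μ : Measure Ω) [IsProbabilityMeasure μ]
    (X1 X2 D ε Y : Ω → ℝ) (α θ π1 π2 ρ : ℝ)
    (X : Ω → Fin 3 → ℝ) (hX : ∀ ω, X ω = ![1, X1 ω, X2 ω])
    (hXm : Measurable X)
    (hX14 : MemLp X1 4 μ) (hX24 : MemLp X2 4 μ)
    (hD2 : MemLp D 2 μ) (hε2 : MemLp ε 2 μ)
    (hM : (gram μ X).det ≠ 0)
    (hindep : IndepFun ε (fun ω => (D ω, X1 ω, X2 ω)) μ)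
    (fperp : Ω → ℝ) (hfperp : fperp = resid μ X fun ω => X1 ω * X2 ω)
    (hvar : variance fperp μ ≠ 0)
    (hrel : cov μ D fperp ≠ 0)
    (hY : ∀ ω, Y ω = α + θ * D ω + π1 * X1 ω + π2 * X2 ω + ρ * (X1 ω * X2 ω) + ε ω) :
    cov μ Y fperp / cov μ D fperp = θ + ρ * variance fperp μ / cov μ D fperp := by
  classical
  set W : Ω → ℝ := fun ω => X1 ω * X2 ω with hW
  set c : Fin 3 → ℝ := projCoef μ X W with hc
  -- membership facts
  have mem40 : MemLp (fun ω => X ω 0) 4 μ := by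
    have h : (fun ω => X ω 0) = fun _ => (1:ℝ) := by funext ω; simp [hX]
    rw [h]; exact memLp_const 1
  have mem41 : MemLp (fun ω => X ω 1) 4 μ := by
    have h : (fun ω => X ω 1) = X1 := by funext ω; simp [hX]
    rw [h]; exact hX14
  have mem42 : MemLp (fun ω => X ω 2) 4 μ := by
    have h : (fun ω => X ω 2) = X2 := by funext ω; simp [hX]
    rw [h]; exact hX24
  have mem4 : ∀ i : Fin 3, MemLp (fun ω => X ω i) 4 μ := by
    intro i
    fin_cases i
    · exact mem40
    · exact mem41
    · exact mem42
  have mem2 : ∀ i : Fin 3, MemLp (fun ω => X ω i) 2 μ := fun i =>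
    (mem4 i).mono_exponent (by norm_num)
  have memW2 : MemLp W 2 μ := aux_memLp_mul hX14 hX24
  have memX12 : MemLp X1 2 μ := hX14.mono_exponent (by norm_num)
  have memX22 : MemLp X2 2 μ := hX24.mono_exponent (by norm_num)
  have memfp2 : MemLp fperp 2 μ := by
    rw [hfperp]
    have : MemLp (fun ω => ∑ j : Fin 3, X ω j * c j) 2 μ := by
      apply memLp_finset_sum
      intro j _
      have he : (fun ω => X ω j * c j) = fun ω => c j * X ω j := by funext ω; ring
      rw [he]; exact (mem2 j).const_mul (c j)
    exact memW2.sub this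
  -- orthogonality: ∫ Xᵢ f⊥ = 0
  have ortho : ∀ i : Fin 3, ∫ ω, X ω i * fperp ω ∂μ = 0 := by
    intro i
    have hint1 : Integrable (fun ω => X ω i * W ω) μ := aux_int_mul (mem2 i) memW2
    have hint2 : ∀ j : Fin 3, Integrable (fun ω => X ω i * X ω j * c j) μ := fun j =>
      (aux_int_mul (mem2 i) (mem2 j)).mul_const (c j)
    have hint3 : Integrable (fun ω => ∑ j : Fin 3, X ω i * X ω j * c j) μ :=
      integrable_finset_sum _ (fun j _ => hint2 j)
    have hexp : (fun ω => X ω i * fperp ω)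
        = fun ω => X ω i * W ω - ∑ j : Fin 3, X ω i * X ω j * c j := by
      funext ω
      rw [hfperp]
      simp only [resid, mul_sub, Finset.mul_sum]
      congr 1
      refine Finset.sum_congr rfl fun j _ => by ring
    rw [hexp, integral_sub hint1 hint3, integral_finset_sum _ (fun j _ => hint2 j)]
    have hsum : ∀ j : Fin 3, ∫ ω, X ω i * X ω j * c j ∂μ = gram μ X i j * c j := by
      intro j
      rw [integral_mul_const]
      rfl
    simp only [hsum]
    have hmv : (gram μ X).mulVec c = fun i => ∫ ω, X ω i * W ω ∂μ := by
      rw [hc, projCoef, Matrix.mulVec_mulVec, Matrix.mul_nonsing_inv _ (isUnit_iff_ne_zero.mpr hM),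
        Matrix.one_mulVec]
    have hee : ∑ j : Fin 3, gram μ X i j * c j = (gram μ X).mulVec c i := rfl
    rw [hee, hmv]
    exact sub_self _
  -- specializations
  have hX0 : ∀ ω, X ω 0 = 1 := fun ω => by simp [hX]
  have hX1' : ∀ ω, X ω 1 = X1 ω := fun ω => by simp [hX]
  have hX2' : ∀ ω, X ω 2 = X2 ω := fun ω => by simp [hX]
  have hE0 : ∫ ω, fperp ω ∂μ = 0 := by
    have := ortho 0
    simpa [hX0] using this
  have hE1 : ∫ ω, X1 ω * fperp ω ∂μ = 0 := by
    have := ortho 1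
    simpa [hX1'] using this
  have hE2 : ∫ ω, X2 ω * fperp ω ∂μ = 0 := by
    have := ortho 2
    simpa [hX2'] using this
  -- ∫ W f⊥ = ∫ f⊥²
  have intfp2 : Integrable (fun ω => fperp ω * fperp ω) μ := aux_int_mul memfp2 memfp2
  have hEW : ∫ ω, W ω * fperp ω ∂μ = ∫ ω, fperp ω * fperp ω ∂μ := by
    have hint2 : ∀ j : Fin 3, Integrable (fun ω => X ω j * fperp ω * c j) μ := fun j =>
      (aux_int_mul (mem2 j) memfp2).mul_const (c j)
    have hint3 : Integrable (fun ω => ∑ j : Fin 3, X ω j * fperp ω * c j) μ :=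
      integrable_finset_sum _ (fun j _ => hint2 j)
    have hexp : (fun ω => W ω * fperp ω)
        = fun ω => fperp ω * fperp ω + ∑ j : Fin 3, X ω j * fperp ω * c j := by
      funext ω
      have : W ω = fperp ω + ∑ j : Fin 3, X ω j * c j := by
        rw [hfperp]; simp [resid, ← hc]
      rw [this, add_mul, Finset.sum_mul]
      congr 1
      refine Finset.sum_congr rfl fun j _ => by ring
    rw [hexp, integral_add intfp2 hint3, integral_finset_sum _ (fun j _ => hint2 j)]
    have : ∀ j : Fin 3, ∫ ω, X ω j * fperp ω * c j ∂μ = 0 := by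
      intro j
      rw [integral_mul_const, ortho j, zero_mul]
    simp [this]
  -- ε ⊥ f⊥
  have hEε : ∫ ω, ε ω * fperp ω ∂μ = 0 := by
    have m1 : Measurable fun p : ℝ × ℝ × ℝ => p.2.1 := measurable_snd.fst
    have m2 : Measurable fun p : ℝ × ℝ × ℝ => p.2.2 := measurable_snd.snd
    have hφ : Measurable (fun p : ℝ × ℝ × ℝ =>
        p.2.1 * p.2.2 - (1 * c 0 + p.2.1 * c 1 + p.2.2 * c 2)) :=
      (m1.mul m2).sub ((measurable_const.add (m1.mul_const (c 1))).add (m2.mul_const (c 2)))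
    have hind2 : IndepFun ε fperp μ := by
      have h := hindep.comp measurable_id hφ
      have heq : (fun p : ℝ × ℝ × ℝ =>
          p.2.1 * p.2.2 - (1 * c 0 + p.2.1 * c 1 + p.2.2 * c 2)) ∘
          (fun ω => (D ω, X1 ω, X2 ω)) = fperp := by
        funext ω
        simp only [Function.comp_apply, hfperp, resid, Fin.sum_univ_three, ← hc, hX0 ω,
          hX1' ω, hX2' ω, hW]
        rfl
      rwa [heq] at h
    have h : ∫ ω, ε ω * fperp ω ∂μ = (∫ ω, ε ω ∂μ) * ∫ ω, fperp ω ∂μ :=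
      hind2.integral_mul_eq_mul_integral hε2.aestronglyMeasurable memfp2.aestronglyMeasurable
    rw [h, hE0, mul_zero]
  -- variance
  have hVar : variance fperp μ = ∫ ω, fperp ω * fperp ω ∂μ := by
    rw [variance_eq_sub memfp2, hE0]
    simp [sq]
  -- cov D f⊥
  have hcovD : cov μ D fperp = ∫ ω, D ω * fperp ω ∂μ := by
    rw [cov, hE0, mul_zero, sub_zero]
  -- expand cov Y f⊥
  have hintD : Integrable (fun ω => D ω * fperp ω) μ := aux_int_mul hD2 memfp2
  have hintε : Integrable (fun ω => ε ω * fperp ω) μ := aux_int_mul hε2 memfp2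
  have hintf : Integrable fperp μ := memfp2.integrable one_le_two
  have hint1 : Integrable (fun ω => X1 ω * fperp ω) μ := aux_int_mul memX12 memfp2
  have hint2 : Integrable (fun ω => X2 ω * fperp ω) μ := aux_int_mul memX22 memfp2
  have hintW : Integrable (fun ω => W ω * fperp ω) μ := aux_int_mul memW2 memfp2
  have hYf : (fun ω => Y ω * fperp ω) = fun ω =>
      α * fperp ω + θ * (D ω * fperp ω) + π1 * (X1 ω * fperp ω) + π2 * (X2 ω * fperp ω)
        + ρ * (W ω * fperp ω) + ε ω * fperp ω := by
    funext ω; rw [hY]; ring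
  have hcovY : cov μ Y fperp = θ * (∫ ω, D ω * fperp ω ∂μ) + ρ * variance fperp μ := by
    have I1 : Integrable (fun ω => α * fperp ω) μ := hintf.const_mul α
    have I2 : Integrable (fun ω => α * fperp ω + θ * (D ω * fperp ω)) μ := by
      exact I1.add (hintD.const_mul θ)
    have I3 : Integrable (fun ω => α * fperp ω + θ * (D ω * fperp ω)
        + π1 * (X1 ω * fperp ω)) μ := by
      exact I2.add (hint1.const_mul π1)
    have I4 : Integrable (fun ω => α * fperp ω + θ * (D ω * fperp ω)
        + π1 * (X1 ω * fperp ω) + π2 * (X2 ω * fperp ω)) μ := by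
      exact I3.add (hint2.const_mul π2)
    have I5 : Integrable (fun ω => α * fperp ω + θ * (D ω * fperp ω)
        + π1 * (X1 ω * fperp ω) + π2 * (X2 ω * fperp ω) + ρ * (W ω * fperp ω)) μ := by
      exact I4.add (hintW.const_mul ρ)
    rw [cov, hE0, mul_zero, sub_zero, hYf]
    rw [integral_add I5 hintε, integral_add I4 (hintW.const_mul ρ),
      integral_add I3 (hint2.const_mul π2), integral_add I2 (hint1.const_mul π1),
      integral_add I1 (hintD.const_mul θ)]
    rw [integral_const_mul, integral_const_mul, integral_const_mul, integral_const_mul,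
      integral_const_mul, hE0, hE1, hE2, hEε, hEW, hVar]
    ring
  rw [hcovY, hcovD]
  rw [hcovD] at hrel
  field_simp

end
end

section
/- FKG-type covariance inequality: Let X, ε, η be mutually independent real random variables, and let g, h: R² → R be measurable functions, each non-decreasing in its first argument, with g(X,ε) and h(X,η) having finite second moments. Then Cov(g(X,ε), h(X,η)) ≥ 0. -/
/-!
Condition on `X`. By independence the joint law of `(X, ε, η)` is a product `α ⊗ β ⊗ γ`, and
Fubini turns the covariance into `Cov(G(X), H(X))` with `G x = E g(x, ε)` and `H x = E h(x, η)`.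
Both `G` and `H` are non-decreasing on a set of full `α`-measure, so `(G x - G y)(H x - H y) ≥ 0`
for `α ⊗ α`-almost every `(x, y)`; integrating this gives `2 Cov(G(X), H(X)) ≥ 0`
(Chebyshev's integral inequality).
-/

open MeasureTheory ProbabilityTheory

noncomputable section

theorem cov_map {Ω E : Type*} [MeasurableSpace Ω] [MeasurableSpace E] {μ : Measure Ω}
    {T : Ω → E} (hT : AEMeasurable T μ) {U V : E → ℝ}
    (hU : AEStronglyMeasurable U (μ.map T)) (hV : AEStronglyMeasurable V (μ.map T)) :
    cov (μ.map T) U V = cov μ (U ∘ T) (V ∘ T) := by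
  rw [cov, cov, integral_map hT hU, integral_map hT hV,
    integral_map (f := fun x => U x * V x) hT (hU.mul hV)]
  rfl

theorem ProbabilityTheory.iIndepFun.map_prodMk_eq_prod {Ω E : Type*} [MeasurableSpace Ω]
    [MeasurableSpace E]
    {μ : Measure Ω} [IsProbabilityMeasure μ] {X Y Z : Ω → E}
    (hindep : iIndepFun ![X, Y, Z] μ) (hX : Measurable X) (hY : Measurable Y) (hZ : Measurable Z) :
    μ.map (fun ω => (X ω, Y ω, Z ω)) = (μ.map X).prod ((μ.map Y).prod (μ.map Z)) := by
  have hmeas : ∀ i, Measurable (![X, Y, Z] i) := fun i => by fin_cases i <;> assumption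
  have hX_YZ : IndepFun X (fun ω => (Y ω, Z ω)) μ := by
    simpa using (hindep.indepFun_prodMk hmeas 1 2 0 (by decide) (by decide)).symm
  have hYZ : IndepFun Y Z μ := by
    simpa using hindep.indepFun (show (1 : Fin 3) ≠ 2 by decide)
  rw [(indepFun_iff_map_prod_eq_prod_map_map hX.aemeasurable
      (hY.prodMk hZ).aemeasurable).mp hX_YZ,
    (indepFun_iff_map_prod_eq_prod_map_map hY.aemeasurable hZ.aemeasurable).mp hYZ]

theorem MonovaryOn.cov_nonneg {E : Type*} [MeasurableSpace E] {α : Measure E}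
    [IsProbabilityMeasure α] {G H : E → ℝ} {s : Set E} (hGH : MonovaryOn G H s)
    (hs : ∀ᵐ x ∂α, x ∈ s) (hG : Integrable G α) (hH : Integrable H α)
    (hGH' : Integrable (fun x => G x * H x) α) : 0 ≤ cov α G H := by
  have hs₂ : ∀ᵐ p ∂(α.prod α), p.1 ∈ s ∧ p.2 ∈ s :=
    (Measure.quasiMeasurePreserving_fst.ae hs).and (Measure.quasiMeasurePreserving_snd.ae hs)
  have hpos : 0 ≤ ∫ p, (G p.2 - G p.1) * (H p.2 - H p.1) ∂(α.prod α) :=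
    integral_nonneg_of_ae <| hs₂.mono fun p hp => hGH.sub_mul_sub_nonneg hp.1 hp.2
  have hdiag : Integrable (fun p : E × E => G p.1 * H p.1 + G p.2 * H p.2) (α.prod α) :=
    (hGH'.comp_fst α).add (hGH'.comp_snd α)
  have hcross : Integrable (fun p : E × E => G p.1 * H p.2 + H p.1 * G p.2) (α.prod α) :=
    (hG.mul_prod hH).add (hH.mul_prod hG)
  have hexpand : (fun p : E × E => (G p.2 - G p.1) * (H p.2 - H p.1)) =
      fun p => (G p.1 * H p.1 + G p.2 * H p.2) - (G p.1 * H p.2 + H p.1 * G p.2) := by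
    ext p; ring
  rw [hexpand, integral_sub hdiag hcross, integral_add (hGH'.comp_fst α) (hGH'.comp_snd α),
    integral_add (hG.mul_prod hH) (hH.mul_prod hG), integral_fun_fst (fun x => G x * H x),
    integral_fun_snd (fun x => G x * H x),
    integral_prod_mul G H, integral_prod_mul H G] at hpos
  simp only [probReal_univ, one_smul] at hpos
  rw [cov]
  linarith

theorem cov_nonneg_of_monotone_prod {A B C : Type*} [MeasurableSpace A] [LinearOrder A]
    [MeasurableSpace B] [MeasurableSpace C] {α : Measure A} {β : Measure B} {γ : Measure C}
    [IsProbabilityMeasure α] [IsProbabilityMeasure β] [IsProbabilityMeasure γ]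
    {g : A → B → ℝ} {h : A → C → ℝ}
    (hgmono : ∀ e, Monotone fun x => g x e) (hhmono : ∀ n, Monotone fun x => h x n)
    (hg : Integrable (fun q : A × B × C => g q.1 q.2.1) (α.prod (β.prod γ)))
    (hh : Integrable (fun q : A × B × C => h q.1 q.2.2) (α.prod (β.prod γ)))
    (hgh : Integrable (fun q : A × B × C => g q.1 q.2.1 * h q.1 q.2.2) (α.prod (β.prod γ))) :
    0 ≤ cov (α.prod (β.prod γ)) (fun q => g q.1 q.2.1) (fun q => h q.1 q.2.2) := by
  set G : A → ℝ := fun x => ∫ e, g x e ∂β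
  set H : A → ℝ := fun x => ∫ n, h x n ∂γ
  have hG_slice (x : A) : ∫ q : B × C, g x q.1 ∂(β.prod γ) = G x := by
    simp [G, integral_fun_fst (fun e => g x e)]
  have hH_slice (x : A) : ∫ q : B × C, h x q.2 ∂(β.prod γ) = H x := by
    simp [H, integral_fun_snd (fun n => h x n)]
  have hGH_slice (x : A) : ∫ q : B × C, g x q.1 * h x q.2 ∂(β.prod γ) = G x * H x :=
    integral_prod_mul _ _
  have hcov : cov (α.prod (β.prod γ)) (fun q => g q.1 q.2.1) (fun q => h q.1 q.2.2) =
      cov α G H := by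
    simp only [cov, integral_prod _ hg, integral_prod _ hh, integral_prod _ hgh, hG_slice,
      hH_slice, hGH_slice]
  -- off `s` a slice integral takes the junk value `0`, so `G` and `H` are monotone only on `s`
  set s := {x | Integrable (g x) β ∧ Integrable (h x) γ}
  have hs : ∀ᵐ x ∂α, x ∈ s := by
    filter_upwards [hg.prod_right_ae, hh.prod_right_ae] with x hgx hhx
    exact ⟨(Integrable.comp_fst_iff (IsProbabilityMeasure.ne_zero γ)).mp hgx,
      (Integrable.comp_snd_iff (IsProbabilityMeasure.ne_zero β)).mp hhx⟩
  have hGmono : MonotoneOn G s := fun x hx y hy hxy =>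
    integral_mono hx.1 hy.1 fun e => hgmono e hxy
  have hHmono : MonotoneOn H s := fun x hx y hy hxy =>
    integral_mono hx.2 hy.2 fun n => hhmono n hxy
  rw [hcov]
  refine (hGmono.monovaryOn hHmono).cov_nonneg hs ?_ ?_ ?_
  · simpa only [hG_slice] using hg.integral_prod_left
  · simpa only [hH_slice] using hh.integral_prod_left
  · simpa only [hGH_slice] using hgh.integral_prod_left

/-- FKG-type covariance inequality: for mutually independent
`X, ε, η` and functions `g, h` non-decreasing in the first argument,
`Cov(g(X,ε), h(X,η)) ≥ 0`. -/
theorem stmt5 {Ω : Type*} [MeasurableSpace Ω] (μ : Measure Ω) [IsProbabilityMeasure μ]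
    (X ε η : Ω → ℝ)
    (hXm : Measurable X) (hεm : Measurable ε) (hηm : Measurable η)
    (hindep : iIndepFun ![X, ε, η] μ)
    (g h : ℝ → ℝ → ℝ)
    (hgm : Measurable fun p : ℝ × ℝ => g p.1 p.2)
    (hhm : Measurable fun p : ℝ × ℝ => h p.1 p.2)
    (hgmono : ∀ e, Monotone fun x => g x e)
    (hhmono : ∀ e, Monotone fun x => h x e)
    (hg2 : MemLp (fun ω => g (X ω) (ε ω)) 2 μ)
    (hh2 : MemLp (fun ω => h (X ω) (η ω)) 2 μ) :
    0 ≤ cov μ (fun ω => g (X ω) (ε ω)) (fun ω => h (X ω) (η ω)) := by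
  set T : Ω → ℝ × ℝ × ℝ := fun ω => (X ω, ε ω, η ω)
  have hT : AEMeasurable T μ := (hXm.prodMk (hεm.prodMk hηm)).aemeasurable
  have hlaw : μ.map T = (μ.map X).prod ((μ.map ε).prod (μ.map η)) :=
    hindep.map_prodMk_eq_prod hXm hεm hηm
  have := Measure.isProbabilityMeasure_map (μ := μ) hXm.aemeasurable
  have := Measure.isProbabilityMeasure_map (μ := μ) hεm.aemeasurable
  have := Measure.isProbabilityMeasure_map (μ := μ) hηm.aemeasurable
  have hF : Measurable fun q : ℝ × ℝ × ℝ => g q.1 q.2.1 :=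
    hgm.comp (measurable_fst.prodMk (measurable_fst.comp measurable_snd))
  have hK : Measurable fun q : ℝ × ℝ × ℝ => h q.1 q.2.2 :=
    hhm.comp (measurable_fst.prodMk (measurable_snd.comp measurable_snd))
  calc 0 ≤ cov (μ.map T) (fun q => g q.1 q.2.1) (fun q => h q.1 q.2.2) := by
        rw [hlaw]
        refine cov_nonneg_of_monotone_prod hgmono hhmono ?_ ?_ ?_ <;> rw [← hlaw]
        · exact (integrable_map_measure hF.aestronglyMeasurable hT).mpr
            (hg2.integrable one_le_two)
        · exact (integrable_map_measure hK.aestronglyMeasurable hT).mpr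
            (hh2.integrable one_le_two)
        · exact (integrable_map_measure (hF.mul hK).aestronglyMeasurable hT).mpr
            (hg2.integrable_mul hh2)
    _ = _ := cov_map hT hF.aestronglyMeasurable hK.aestronglyMeasurable
end
end

section
/- Let X, ε, η be mutually independent real random variables, and let g, h: R² → R be measurable with g non-decreasing in its first argument and h non-increasing in its first argument, both with finite second moments when evaluated at (X,ε) and (X,η) respectively. Then Cov(g(X,ε), h(X,η)) ≤ 0. -/
open MeasureTheory ProbabilityTheory

noncomputable section

/-!
Integrating out the noise, `E[g(X,ε) h(X,η) | X] = G(X) H(X)` with `G x = E g(x,ε)` non-decreasing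
and `H x = E h(x,η)` non-increasing, by independence of `ε` and `η` from each other and from `X`.
The covariance is then that of two oppositely ordered functions of the single variable `X`, which
is non-positive by Chebyshev's integral inequality: `(G x - G y)(H x - H y) ≤ 0` integrates over
two independent copies of `X` to twice that covariance.
-/

section Chebyshev

variable {α : Type*} [MeasurableSpace α] {ν : Measure α} [IsProbabilityMeasure ν] {f g : α → ℝ}

theorem integral_prod_sub_mul_sub (hf : Integrable f ν) (hg : Integrable g ν)
    (hfg : Integrable (f * g) ν) :
    ∫ z, (f z.1 - f z.2) * (g z.1 - g z.2) ∂ν.prod ν =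
      2 * (∫ x, f x * g x ∂ν - (∫ x, f x ∂ν) * ∫ x, g x ∂ν) := by
  have h₁ := hfg.comp_fst ν
  have h₂ := hfg.comp_snd ν
  have h₃ := hf.mul_prod hg
  have h₄ := hg.mul_prod hf
  have h₁₂ : Integrable (fun z => (f * g) z.1 + (f * g) z.2) (ν.prod ν) := h₁.add h₂
  have h₃₄ : Integrable (fun z => f z.1 * g z.2 + g z.1 * f z.2) (ν.prod ν) := h₃.add h₄
  calc ∫ z, (f z.1 - f z.2) * (g z.1 - g z.2) ∂ν.prod ν
      = ∫ z, ((f * g) z.1 + (f * g) z.2 - (f z.1 * g z.2 + g z.1 * f z.2)) ∂ν.prod ν := by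
        congr 1; ext z; simp only [Pi.mul_apply]; ring
    _ = 2 * (∫ x, f x * g x ∂ν - (∫ x, f x ∂ν) * ∫ x, g x ∂ν) := by
        rw [integral_sub h₁₂ h₃₄, integral_add h₁ h₂, integral_add h₃ h₄,
          integral_fun_fst, integral_fun_snd, integral_prod_mul, integral_prod_mul]
        simp only [probReal_univ, one_smul, Pi.mul_apply]
        ring

theorem integral_mul_le_of_antivaryOn {s : Set α} (hanti : AntivaryOn f g s)
    (hs : ∀ᵐ x ∂ν, x ∈ s) (hf : Integrable f ν) (hg : Integrable g ν)
    (hfg : Integrable (f * g) ν) :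
    ∫ x, f x * g x ∂ν ≤ (∫ x, f x ∂ν) * ∫ x, g x ∂ν := by
  have hsign : ∀ᵐ z ∂ν.prod ν, (f z.1 - f z.2) * (g z.1 - g z.2) ≤ 0 := by
    filter_upwards [Measure.quasiMeasurePreserving_fst.ae hs,
      Measure.quasiMeasurePreserving_snd.ae hs] with z h₁ h₂
    exact hanti.sub_mul_sub_nonpos h₂ h₁
  have hint := integral_nonpos_of_ae hsign
  rw [integral_prod_sub_mul_sub hf hg hfg] at hint
  linarith

end Chebyshev

theorem cov_prod_prod_nonpos {α β γ : Type*} [MeasurableSpace α] [MeasurableSpace β]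
    [MeasurableSpace γ] [LinearOrder α] {ν : Measure α} {νβ : Measure β} {νγ : Measure γ}
    [IsProbabilityMeasure ν] [IsProbabilityMeasure νβ] [IsProbabilityMeasure νγ]
    {g : α → β → ℝ} {h : α → γ → ℝ}
    (hg_mono : ∀ e, Monotone fun x => g x e) (hh_anti : ∀ e, Antitone fun x => h x e)
    (hg : MemLp (fun z : α × β × γ => g z.1 z.2.1) 2 (ν.prod (νβ.prod νγ)))
    (hh : MemLp (fun z : α × β × γ => h z.1 z.2.2) 2 (ν.prod (νβ.prod νγ))) :
    cov (ν.prod (νβ.prod νγ)) (fun z => g z.1 z.2.1) (fun z => h z.1 z.2.2) ≤ 0 := by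
  set G : α → ℝ := fun x => ∫ w, g x w.1 ∂νβ.prod νγ
  set H : α → ℝ := fun x => ∫ w, h x w.2 ∂νβ.prod νγ
  have hg_int := hg.integrable one_le_two
  have hh_int := hh.integrable one_le_two
  have hgh_int : Integrable (fun z : α × β × γ => g z.1 z.2.1 * h z.1 z.2.2)
      (ν.prod (νβ.prod νγ)) := hg.integrable_mul hh
  have hGH : ∀ x, ∫ w, g x w.1 * h x w.2 ∂νβ.prod νγ = G x * H x := fun x => by
    simp only [G, H, integral_prod_mul, integral_fun_fst, integral_fun_snd, probReal_univ,
      one_smul]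
  set s := {x | Integrable (fun w => g x w.1) (νβ.prod νγ) ∧
    Integrable (fun w => h x w.2) (νβ.prod νγ)}
  have hs : ∀ᵐ x ∂ν, x ∈ s := hg_int.prod_right_ae.and hh_int.prod_right_ae
  have hanti : AntivaryOn G H s := MonotoneOn.antivaryOn
    (fun x hx y hy hxy => integral_mono hx.1 hy.1 fun w => hg_mono w.1 hxy)
    (fun x hx y hy hxy => integral_mono hy.2 hx.2 fun w => hh_anti w.2 hxy)
  have key := integral_mul_le_of_antivaryOn hanti hs hg_int.integral_prod_left
    hh_int.integral_prod_left (hgh_int.integral_prod_left.congr (ae_of_all _ hGH))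
  rw [cov, integral_prod _ hgh_int, integral_prod _ hg_int, integral_prod _ hh_int]
  simp only [hGH]
  linarith

theorem ProbabilityTheory.iIndepFun.map_prodMk_prodMk_eq_prod_map {Ω β : Type*}
    [MeasurableSpace Ω] [MeasurableSpace β] {μ : Measure Ω} [IsProbabilityMeasure μ]
    {X Y Z : Ω → β} (hX : Measurable X) (hY : Measurable Y) (hZ : Measurable Z)
    (hXYZ : iIndepFun ![X, Y, Z] μ) :
    μ.map (fun ω => (X ω, Y ω, Z ω)) = (μ.map X).prod ((μ.map Y).prod (μ.map Z)) := by
  have hm : ∀ i, Measurable (![X, Y, Z] i) := by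
    intro i; fin_cases i <;> assumption
  have hYZ : IndepFun Y Z μ := by
    simpa using hXYZ.indepFun (i := 1) (j := 2) (by decide)
  have hX_YZ : IndepFun X (fun ω => (Y ω, Z ω)) μ := by
    simpa using (hXYZ.indepFun_prodMk hm 1 2 0 (by decide) (by decide)).symm
  rw [(indepFun_iff_map_prod_eq_prod_map_map hX.aemeasurable (hY.prodMk hZ).aemeasurable).1 hX_YZ,
    (indepFun_iff_map_prod_eq_prod_map_map hY.aemeasurable hZ.aemeasurable).1 hYZ]

/-- FKG-type covariance inequality: for mutually independent
`X, ε, η` and functions `g, h` `g` non-decreasing and `h` non-increasing in the first argument,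
`Cov(g(X,ε), h(X,η)) ≤ 0`. -/
theorem stmt6 {Ω : Type*} [MeasurableSpace Ω] (μ : Measure Ω) [IsProbabilityMeasure μ]
    (X ε η : Ω → ℝ)
    (hXm : Measurable X) (hεm : Measurable ε) (hηm : Measurable η)
    (hindep : iIndepFun ![X, ε, η] μ)
    (g h : ℝ → ℝ → ℝ)
    (hgm : Measurable fun p : ℝ × ℝ => g p.1 p.2)
    (hhm : Measurable fun p : ℝ × ℝ => h p.1 p.2)
    (hgmono : ∀ e, Monotone fun x => g x e)
    (hhmono : ∀ e, Antitone fun x => h x e)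
    (hg2 : MemLp (fun ω => g (X ω) (ε ω)) 2 μ)
    (hh2 : MemLp (fun ω => h (X ω) (η ω)) 2 μ) :
    cov μ (fun ω => g (X ω) (ε ω)) (fun ω => h (X ω) (η ω)) ≤ 0 := by
  have := Measure.isProbabilityMeasure_map (μ := μ) hXm.aemeasurable
  have := Measure.isProbabilityMeasure_map (μ := μ) hεm.aemeasurable
  have := Measure.isProbabilityMeasure_map (μ := μ) hηm.aemeasurable
  have hT : Measurable fun ω => (X ω, ε ω, η ω) := hXm.prodMk (hεm.prodMk hηm)
  have hG : Measurable fun z : ℝ × ℝ × ℝ => g z.1 z.2.1 :=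
    hgm.comp (measurable_fst.prodMk measurable_snd.fst)
  have hH : Measurable fun z : ℝ × ℝ × ℝ => h z.1 z.2.2 :=
    hhm.comp (measurable_fst.prodMk measurable_snd.snd)
  have hlaw := hindep.map_prodMk_prodMk_eq_prod_map hXm hεm hηm
  have hg2' := (memLp_map_measure_iff hG.aestronglyMeasurable hT.aemeasurable).2 hg2
  have hh2' := (memLp_map_measure_iff hH.aestronglyMeasurable hT.aemeasurable).2 hh2
  rw [hlaw] at hg2' hh2'
  have hcov := cov_prod_prod_nonpos hgmono hhmono hg2' hh2'
  rwa [← hlaw, cov_map hT.aemeasurable hG.aestronglyMeasurable hH.aestronglyMeasurable] at hcov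

end
end

section
/- Sign reversal of the IV estimand under misspecification: in the setting of the adversarial construction (Y = α + θD + X^Tπ + g·f̃(X) + ε, ε independent of (D,X), Var(f_⊥) > 0, Cov(D, f_⊥) ≠ 0), for any θ > 0 one can choose g ∈ R such that the IV estimand θ_IV = Cov(Y, f_⊥)/Cov(D, f_⊥) is strictly negative; specifically g = −2θ·Cov(D, f_⊥)/Var(f_⊥) yields θ_IV = −θ. -/
/-!
The residual `f_⊥` is orthogonal in `L²` to every coordinate of `X`, by the normal equations
`E[X Xᵀ] c = E[X f̃(X)]`. Since `X` contains the constant regressor, `f_⊥` has mean zero, so it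
is uncorrelated with every affine function of `X`, and by independence with `ε`, while
`Cov(f̃(X), f_⊥) = Var(f_⊥)`. Hence `Cov(Y, f_⊥) = θ Cov(D, f_⊥) + g Var(f_⊥)`, which the
choice of `g` turns into `-θ Cov(D, f_⊥)`.
-/

open MeasureTheory ProbabilityTheory

noncomputable section

section

variable {Ω : Type*} [MeasurableSpace Ω] {μ : Measure Ω}

lemma cov_eq_covariance [IsProbabilityMeasure μ] {U V : Ω → ℝ} (hU : MemLp U 2 μ)
    (hV : MemLp V 2 μ) : cov μ U V = covariance U V μ :=
  (covariance_eq_sub hU hV).symm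

variable {n : ℕ} {X : Ω → Fin n → ℝ} {W : Ω → ℝ}

lemma memLp_sum_coord_mul (hX : ∀ j, MemLp (fun ω => X ω j) 2 μ) (a : Fin n → ℝ) :
    MemLp (fun ω => ∑ j, X ω j * a j) 2 μ :=
  memLp_finsetSum _ fun j _ => (hX j).mul_const (a j)

lemma memLp_resid (hX : ∀ j, MemLp (fun ω => X ω j) 2 μ) (hW : MemLp W 2 μ) :
    MemLp (resid μ X W) 2 μ :=
  hW.sub (memLp_sum_coord_mul hX (projCoef μ X W))

lemma gram_mulVec_projCoef (hM : (gram μ X).det ≠ 0) (W : Ω → ℝ) :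
    (gram μ X).mulVec (projCoef μ X W) = fun i => ∫ ω, X ω i * W ω ∂μ := by
  rw [projCoef, Matrix.mulVec_mulVec, Matrix.mul_nonsing_inv _ hM.isUnit, Matrix.one_mulVec]

lemma integral_coord_mul_resid (hX : ∀ j, MemLp (fun ω => X ω j) 2 μ) (hW : MemLp W 2 μ)
    (hM : (gram μ X).det ≠ 0) (i : Fin n) :
    ∫ ω, X ω i * resid μ X W ω ∂μ = 0 := by
  set c := projCoef μ X W
  have hXW : Integrable (fun ω => X ω i * W ω) μ := (hX i).integrable_mul hW
  have hXX : ∀ j, Integrable (fun ω => X ω i * X ω j * c j) μ := fun j =>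
    ((hX i).integrable_mul (hX j)).mul_const (c j)
  have hnormal : ∑ j, (∫ ω, X ω i * X ω j ∂μ) * c j = ∫ ω, X ω i * W ω ∂μ :=
    congrFun (gram_mulVec_projCoef hM W) i
  calc ∫ ω, X ω i * resid μ X W ω ∂μ
      = ∫ ω, X ω i * W ω - ∑ j, X ω i * X ω j * c j ∂μ := by
        simp only [resid, c, mul_sub, Finset.mul_sum, mul_assoc]
    _ = (∫ ω, X ω i * W ω ∂μ) - ∑ j, (∫ ω, X ω i * X ω j ∂μ) * c j := by
        rw [integral_sub hXW (integrable_finsetSum _ fun j _ => hXX j),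
          integral_finsetSum _ fun j _ => hXX j]
        simp only [integral_mul_const]
    _ = 0 := by rw [hnormal, sub_self]

lemma integral_resid_eq_zero {i₀ : Fin n} (hconst : ∀ ω, X ω i₀ = 1)
    (hX : ∀ j, MemLp (fun ω => X ω j) 2 μ) (hW : MemLp W 2 μ) (hM : (gram μ X).det ≠ 0) :
    ∫ ω, resid μ X W ω ∂μ = 0 := by
  simpa [hconst] using integral_coord_mul_resid hX hW hM i₀

lemma ProbabilityTheory.IndepFun.resid_comp {γ : Type*} [MeasurableSpace γ] {V : Ω → γ}
    {f : (Fin n → ℝ) → ℝ} (h : IndepFun V X μ) (hf : Measurable f) :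
    IndepFun V (resid μ X fun ω => f (X ω)) μ :=
  h.comp (φ := id) (ψ := fun x => f x - ∑ j, x j * projCoef μ X (fun ω => f (X ω)) j)
    measurable_id (hf.sub <| Finset.measurable_sum _ fun j _ =>
      (measurable_pi_apply j).mul_const _)

variable [IsProbabilityMeasure μ] {i₀ : Fin n}

lemma covariance_coord_resid (hconst : ∀ ω, X ω i₀ = 1)
    (hX : ∀ j, MemLp (fun ω => X ω j) 2 μ) (hW : MemLp W 2 μ) (hM : (gram μ X).det ≠ 0)
    (i : Fin n) : covariance (fun ω => X ω i) (resid μ X W) μ = 0 := by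
  rw [covariance_eq_sub (hX i) (memLp_resid hX hW)]
  change (∫ ω, X ω i * resid μ X W ω ∂μ) - _ = 0
  rw [integral_coord_mul_resid hX hW hM, integral_resid_eq_zero hconst hX hW hM, mul_zero,
    sub_zero]

lemma covariance_sum_coord_mul_resid (hconst : ∀ ω, X ω i₀ = 1)
    (hX : ∀ j, MemLp (fun ω => X ω j) 2 μ) (hW : MemLp W 2 μ) (hM : (gram μ X).det ≠ 0)
    (a : Fin n → ℝ) : covariance (fun ω => ∑ j, X ω j * a j) (resid μ X W) μ = 0 := by
  rw [covariance_fun_sum_left (fun j => (hX j).mul_const (a j)) (memLp_resid hX hW)]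
  simp [covariance_mul_const_left, covariance_coord_resid hconst hX hW hM]

lemma covariance_resid_eq_variance (hconst : ∀ ω, X ω i₀ = 1)
    (hX : ∀ j, MemLp (fun ω => X ω j) 2 μ) (hW : MemLp W 2 μ) (hM : (gram μ X).det ≠ 0) :
    covariance W (resid μ X W) μ = variance (resid μ X W) μ := by
  have hr := memLp_resid hX hW
  have hsplit : resid μ X W + (fun ω => ∑ j, X ω j * projCoef μ X W j) = W := by
    ext ω; simp [resid]
  rw [← congrArg (covariance · (resid μ X W) μ) hsplit,
    covariance_add_left hr (memLp_sum_coord_mul hX _) hr,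
    covariance_sum_coord_mul_resid hconst hX hW hM, add_zero,
    covariance_self hr.aestronglyMeasurable.aemeasurable]

end

theorem stmt18_general {Ω : Type*} [MeasurableSpace Ω] (μ : Measure Ω) [IsProbabilityMeasure μ]
    {J : ℕ} (X : Ω → Fin (J + 1) → ℝ) (hconst : ∀ ω, X ω 0 = 1)
    (Y D ε : Ω → ℝ) (f : (Fin (J + 1) → ℝ) → ℝ)
    (hfm : Measurable f)
    (hX2 : ∀ j, MemLp (fun ω => X ω j) 2 μ)
    (hf2 : MemLp (fun ω => f (X ω)) 2 μ)
    (hD2 : MemLp D 2 μ) (hε2 : MemLp ε 2 μ)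
    (hM : (gram μ X).det ≠ 0)
    (fperp : Ω → ℝ) (hfperp : fperp = resid μ X fun ω => f (X ω))
    (hvar : 0 < variance fperp μ)
    (hrel : cov μ D fperp ≠ 0)
    (hindep : IndepFun ε (fun ω => (D ω, X ω)) μ)
    (θ α : ℝ) (hθ : 0 < θ) (π : Fin (J + 1) → ℝ)
    (g : ℝ) (hg : g = -2 * θ * cov μ D fperp / variance fperp μ)
    (hY : ∀ ω, Y ω = α + θ * D ω + (∑ j, π j * X ω j) + g * f (X ω) + ε ω) :
    cov μ Y fperp / cov μ D fperp = -θ ∧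
    cov μ Y fperp / cov μ D fperp < 0 := by
  have hr : MemLp fperp 2 μ := hfperp ▸ memLp_resid hX2 hf2
  have hL := memLp_sum_coord_mul hX2 π
  have hgFLε := (hf2.const_smul g).add (hL.add hε2)
  have hθDgFLε := (hD2.const_smul θ).add hgFLε
  have hYsplit : Y = (fun _ => α) + (θ • D + (g • (fun ω => f (X ω)) +
      ((fun ω => ∑ j, X ω j * π j) + ε))) := by
    ext ω
    simp only [hY, mul_comm (X ω _), Pi.add_apply, Pi.smul_apply, smul_eq_mul]
    ring
  have hεfperp : IndepFun ε fperp μ :=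
    hfperp ▸ (hindep.comp measurable_id measurable_snd).resid_comp hfm
  have hεr : covariance ε fperp μ = 0 := hεfperp.covariance_eq_zero hε2 hr
  have hcovY : cov μ Y fperp = θ * cov μ D fperp + g * variance fperp μ := by
    rw [cov_eq_covariance (hYsplit ▸ (memLp_const α).add hθDgFLε) hr, cov_eq_covariance hD2 hr,
      hYsplit, covariance_add_left (memLp_const α) hθDgFLε hr, covariance_const_left,
      covariance_add_left (hD2.const_smul θ) hgFLε hr, covariance_smul_left,
      covariance_add_left (hf2.const_smul g) (hL.add hε2) hr, covariance_smul_left,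
      covariance_add_left hL hε2 hr, hεr, hfperp,
      covariance_sum_coord_mul_resid hconst hX2 hf2 hM,
      covariance_resid_eq_variance hconst hX2 hf2 hM]
    ring
  have hIV : cov μ Y fperp / cov μ D fperp = -θ := by
    rw [hcovY, hg]
    field_simp
    ring
  exact ⟨hIV, hIV ▸ neg_neg_of_pos hθ⟩

/-- sign reversal under misspecification: for any `θ > 0`, the
choice `g = −2θ·Cov(D, f_⊥)/Var(f_⊥)` in the adversarial DGP
`Y = α + θD + Xᵀπ + g·f̃(X) + ε` yields `θ_IV = −θ < 0`. -/
theorem stmt18 {Ω : Type*} [MeasurableSpace Ω] (μ : Measure Ω) [IsProbabilityMeasure μ]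
    {J : ℕ} (X : Ω → Fin (J + 1) → ℝ) (hconst : ∀ ω, X ω 0 = 1)
    (Y D ε : Ω → ℝ) (f : (Fin (J + 1) → ℝ) → ℝ)
    (hXm : Measurable X) (hfm : Measurable f)
    (hX2 : ∀ j, MemLp (fun ω => X ω j) 2 μ)
    (hf2 : MemLp (fun ω => f (X ω)) 2 μ)
    (hD2 : MemLp D 2 μ) (hε2 : MemLp ε 2 μ)
    (hM : (gram μ X).det ≠ 0)
    (fperp : Ω → ℝ) (hfperp : fperp = resid μ X fun ω => f (X ω))
    (hvar : 0 < variance fperp μ)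
    (hrel : cov μ D fperp ≠ 0)
    (hindep : IndepFun ε (fun ω => (D ω, X ω)) μ)
    (θ α : ℝ) (hθ : 0 < θ) (π : Fin (J + 1) → ℝ)
    (g : ℝ) (hg : g = -2 * θ * cov μ D fperp / variance fperp μ)
    (hY : ∀ ω, Y ω = α + θ * D ω + (∑ j, π j * X ω j) + g * f (X ω) + ε ω) :
    cov μ Y fperp / cov μ D fperp = -θ ∧
    cov μ Y fperp / cov μ D fperp < 0 :=
  stmt18_general μ X hconst Y D ε f hfm hX2 hf2 hD2 hε2 hM fperp hfperp hvar hrel hindep θ α hθ π g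
    hg hY

end
end
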